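/- arXiv:2403.01441 — 5 statements merged into one kernel-verified Lean document; each statement's English description precedes it below -/
import Mathlib

section
/- For ℓ ≥ 1 and n ≥ 1, the number g_ℓ(n) of subgroups of Z^ℓ of index n satisfies the recursion g_ℓ(n) = Σ_{d | n} d · g_{ℓ-1}(d), where g_0(1) = 1 and g_0(n) = 0 for n > 1. -/
open AddSubgroup

section Prelim

variable {B : Type*} [AddCommGroup B]

lemma range_inr_eq (B : Type*) [AddCommGroup B] :
    (AddMonoidHom.inr ℤ B).range = (AddMonoidHom.fst ℤ B).ker := by
  rw [AddMonoidHom.ker_fst]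
  ext ⟨x, b⟩
  simp [AddSubgroup.mem_prod, Prod.ext_iff, eq_comm]

/-- Index decomposition for subgroups of a product. -/
lemma index_eq_mul (H : AddSubgroup (ℤ × B)) :
    H.index = (H.map (AddMonoidHom.fst ℤ B)).index * (H.comap (AddMonoidHom.inr ℤ B)).index := by
  have h1 : (H.comap (AddMonoidHom.inr ℤ B)).index = H.relIndex (AddMonoidHom.fst ℤ B).ker := by
    rw [AddSubgroup.index_comap, range_inr_eq]
  have h2 : H.relIndex (AddMonoidHom.fst ℤ B).ker
      = H.relIndex (H ⊔ (AddMonoidHom.fst ℤ B).ker) := by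
    rw [AddSubgroup.relIndex_sup_left]
  have h3 : (H ⊔ (AddMonoidHom.fst ℤ B).ker).index = (H.map (AddMonoidHom.fst ℤ B)).index := by
    rw [← AddSubgroup.comap_map_eq]
    exact Eq.symm <| Eq.symm <| (AddSubgroup.index_comap_of_surjective (H.map (AddMonoidHom.fst ℤ B))
      (f := AddMonoidHom.fst ℤ B) Prod.fst_surjective)
  rw [h1, h2, ← h3, mul_comm]
  exact (AddSubgroup.relIndex_mul_index le_sup_left).symm

lemma zmultiples_natAbs (c : ℤ) :
    AddSubgroup.zmultiples ((c.natAbs : ℤ)) = AddSubgroup.zmultiples c := by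
  rcases Int.natAbs_eq c with h | h
  · rw [← h]
  · ext x
    simp only [AddSubgroup.mem_zmultiples_iff]
    constructor
    · rintro ⟨k, rfl⟩; exact ⟨-k, by rw [h]; simp [neg_smul, smul_neg]⟩
    · rintro ⟨k, rfl⟩; exact ⟨-k, by rw [h]; simp [neg_smul, smul_neg]⟩

/-- The subgroup of `ℤ × B` built from `a`, a subgroup `K ≤ B`, and a coset `v ∈ B ⧸ K`. -/
noncomputable def Phi (a : ℤ) (K : AddSubgroup B) (v : B ⧸ K) : AddSubgroup (ℤ × B) :=
  AddSubgroup.comap ((AddMonoidHom.id ℤ).prodMap (QuotientAddGroup.mk' K))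
    (AddSubgroup.zmultiples (a, v))

lemma mem_Phi {a : ℤ} {K : AddSubgroup B} {v : B ⧸ K} {x : ℤ} {b : B} :
    (x, b) ∈ Phi a K v ↔ ∃ k : ℤ, k * a = x ∧ k • v = QuotientAddGroup.mk b := by
  simp only [Phi, AddSubgroup.mem_comap, AddSubgroup.mem_zmultiples_iff, Prod.ext_iff,
    AddMonoidHom.coe_prodMap, Prod.map_apply, AddMonoidHom.id_apply, QuotientAddGroup.mk'_apply,
    Prod.smul_fst, Prod.smul_snd, smul_eq_mul, Prod.map_fst, Prod.map_snd]

lemma comap_inr_Phi {a : ℤ} (ha : a ≠ 0) (K : AddSubgroup B) (v : B ⧸ K) :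
    (Phi a K v).comap (AddMonoidHom.inr ℤ B) = K := by
  ext b
  simp only [AddSubgroup.mem_comap, AddMonoidHom.inr_apply]
  rw [mem_Phi]
  constructor
  · rintro ⟨k, hk, hv⟩
    have : k = 0 := by
      rcases mul_eq_zero.mp hk with h | h
      · exact h
      · exact absurd h ha
    subst this
    rw [zero_smul] at hv
    rwa [eq_comm, QuotientAddGroup.eq_zero_iff] at hv
  · intro hb
    exact ⟨0, by simp, by rw [zero_smul, eq_comm, QuotientAddGroup.eq_zero_iff]; exact hb⟩

lemma map_fst_Phi (a : ℤ) (K : AddSubgroup B) (v : B ⧸ K) :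
    (Phi a K v).map (AddMonoidHom.fst ℤ B) = AddSubgroup.zmultiples a := by
  ext x
  simp only [AddSubgroup.mem_map, AddMonoidHom.coe_fst, AddSubgroup.mem_zmultiples_iff]
  constructor
  · rintro ⟨⟨x', b⟩, hb, rfl⟩
    rcases mem_Phi.mp hb with ⟨k, hk, -⟩
    exact ⟨k, by rw [smul_eq_mul, hk]⟩
  · rintro ⟨k, rfl⟩
    obtain ⟨b, hb⟩ := QuotientAddGroup.mk_surjective (k • v)
    exact ⟨(k * a, b), mem_Phi.mpr ⟨k, rfl, hb.symm⟩, rfl⟩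

lemma index_Phi {a : ℤ} (ha : a ≠ 0) (K : AddSubgroup B) (v : B ⧸ K) :
    (Phi a K v).index = a.natAbs * K.index := by
  rw [index_eq_mul, map_fst_Phi, comap_inr_Phi ha, Int.index_zmultiples]

end Prelim

section Finiteness

lemma finite_subgroups (m d : ℕ) (hd : d ≠ 0) :
    Finite {K : AddSubgroup (Fin m → ℤ) // K.index = d} := by
  haveI : NeZero d := ⟨hd⟩
  set f : (Fin m → ℤ) →+ (Fin m → ZMod d) :=
    AddMonoidHom.compLeft (Int.castAddHom (ZMod d)) (Fin m) with hf
  have hker : ∀ K : AddSubgroup (Fin m → ℤ), K.index = d → f.ker ≤ K := by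
    intro K hK b hb
    have hdvd : ∀ i, (d : ℤ) ∣ b i := by
      intro i
      have : ((b i : ℤ) : ZMod d) = 0 := congrFun hb i
      exact_mod_cast (ZMod.intCast_zmod_eq_zero_iff_dvd _ _).mp this
    have hb' : b = d • fun i => b i / d := by
      funext i
      simp only [Pi.smul_apply, nsmul_eq_mul]
      exact (Int.mul_ediv_cancel' (hdvd i)).symm
    rw [hb', ← hK]
    exact K.nsmul_index_mem _
  have hinj : Function.Injective
      (fun K : {K : AddSubgroup (Fin m → ℤ) // K.index = d} => (K.1.map f : AddSubgroup (Fin m → ZMod d))) := by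
    intro K1 K2 h
    have h1 : K1.1.map f = K2.1.map f := h
    have e1 := AddSubgroup.comap_map_eq f K1.1
    have e2 := AddSubgroup.comap_map_eq f K2.1
    rw [sup_of_le_left (hker _ K1.2)] at e1
    rw [sup_of_le_left (hker _ K2.2)] at e2
    exact Subtype.ext (by rw [← e1, ← e2, h1])
  exact Finite.of_injective _ hinj

end Finiteness

section CardEquiv

lemma card_subgroups_equiv {G G' : Type*} [AddGroup G] [AddGroup G'] (e : G ≃+ G') (n : ℕ) :
    Nat.card {H : AddSubgroup G // H.index = n} = Nat.card {H : AddSubgroup G' // H.index = n} := by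
  apply Nat.card_congr
  refine ⟨fun H => ⟨H.1.map e.toAddMonoidHom, ?_⟩, fun H => ⟨H.1.map e.symm.toAddMonoidHom, ?_⟩, ?_, ?_⟩
  · rw [AddSubgroup.index_map_eq _ e.surjective
      (by rw [(AddMonoidHom.ker_eq_bot_iff _).mpr e.injective]; exact bot_le)]
    exact H.2
  · rw [AddSubgroup.index_map_eq _ e.symm.surjective
      (by rw [(AddMonoidHom.ker_eq_bot_iff _).mpr e.symm.injective]; exact bot_le)]
    exact H.2
  · intro H
    apply Subtype.ext
    ext x
    simp [AddSubgroup.mem_map_equiv]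
  · intro H
    apply Subtype.ext
    ext x
    simp [AddSubgroup.mem_map_equiv]

noncomputable def splitEquiv (m : ℕ) : (Fin (m + 1) → ℤ) ≃+ ℤ × (Fin m → ℤ) where
  toFun f := (f 0, fun i => f i.succ)
  invFun p := Fin.cons p.1 p.2
  left_inv f := by
    funext i
    exact Fin.cases rfl (fun j => rfl) i
  right_inv p := rfl
  map_add' f g := rfl

end CardEquiv

section Main

variable {B : Type*} [AddCommGroup B]

lemma natCard_sigma {ι : Type*} [Fintype ι] (α : ι → Type*) [∀ i, Finite (α i)] :
    Nat.card (Sigma α) = ∑ i, Nat.card (α i) := by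
  classical
  haveI : ∀ i, Fintype (α i) := fun i => Fintype.ofFinite _
  simp only [Nat.card_eq_fintype_card, Fintype.card_sigma]

/-- The key bijection. -/
noncomputable def mainMap (n : ℕ) (hn : n ≠ 0) :
    (Σ d : n.divisors, Σ K : {K : AddSubgroup B // K.index = (d : ℕ)}, B ⧸ (K.1 : AddSubgroup B)) →
    {H : AddSubgroup (ℤ × B) // H.index = n} :=
  fun s =>
    ⟨Phi ((n / (s.1 : ℕ) : ℕ) : ℤ) s.2.1.1 s.2.2, by
      obtain ⟨hdvd, -⟩ := Nat.mem_divisors.mp s.1.2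
      have hd0 : (s.1 : ℕ) ≠ 0 := Nat.pos_of_mem_divisors s.1.2 |>.ne'
      have ha0 : ((n / (s.1 : ℕ) : ℕ) : ℤ) ≠ 0 := by
        have : 0 < n / (s.1 : ℕ) :=
          Nat.div_pos (Nat.le_of_dvd (Nat.pos_of_ne_zero hn) hdvd) (Nat.pos_of_ne_zero hd0)
        exact_mod_cast this.ne'
      rw [index_Phi ha0, s.2.1.2, Int.natAbs_natCast, Nat.div_mul_cancel hdvd]⟩

lemma mainMap_bijective (n : ℕ) (hn : n ≠ 0) :
    Function.Bijective (mainMap (B := B) n hn) := by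
  constructor
  · rintro ⟨⟨d1, hd1⟩, ⟨K1, hK1⟩, v1⟩ ⟨⟨d2, hd2⟩, ⟨K2, hK2⟩, v2⟩ h
    have ha : ∀ (d : ℕ), d ∈ n.divisors → ((n / d : ℕ) : ℤ) ≠ 0 := by
      intro d hd
      have : 0 < n / d :=
        Nat.div_pos (Nat.le_of_dvd (Nat.pos_of_ne_zero hn) (Nat.mem_divisors.mp hd).1)
          (Nat.pos_of_mem_divisors hd)
      exact_mod_cast this.ne'
    have h' : Phi ((n / d1 : ℕ) : ℤ) K1 v1 = Phi ((n / d2 : ℕ) : ℤ) K2 v2 :=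
      congrArg Subtype.val h
    have hK : K1 = K2 := by
      rw [← comap_inr_Phi (ha d1 hd1) K1 v1, ← comap_inr_Phi (ha d2 hd2) K2 v2, h']
    subst hK
    have hd : d1 = d2 := hK1.symm.trans hK2
    subst hd
    obtain rfl : hd1 = hd2 := rfl
    obtain rfl : hK1 = hK2 := rfl
    obtain ⟨b, rfl⟩ := QuotientAddGroup.mk_surjective v1
    have hmem : (((n / d1 : ℕ) : ℤ), b) ∈ Phi ((n / d1 : ℕ) : ℤ) K1 (QuotientAddGroup.mk b) :=
      mem_Phi.mpr ⟨1, one_mul _, by rw [one_smul]⟩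
    rw [h'] at hmem
    obtain ⟨k, hk, hkv⟩ := mem_Phi.mp hmem
    have hk1 : k = 1 := mul_right_cancel₀ (ha d1 hd1) (hk.trans (one_mul _).symm)
    subst hk1
    rw [one_smul] at hkv
    rw [hkv]
  · rintro ⟨H, hH⟩
    set K := H.comap (AddMonoidHom.inr ℤ B) with hKdef
    set P := H.map (AddMonoidHom.fst ℤ B) with hPdef
    have hmul : P.index * K.index = n := by rw [← index_eq_mul H]; exact hH
    have hK0 : K.index ≠ 0 := fun h => hn (by rw [← hmul, h, mul_zero])
    have hP0 : P.index ≠ 0 := fun h => hn (by rw [← hmul, h, zero_mul])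
    obtain ⟨c, hc⟩ := Int.subgroup_cyclic P
    have hcn : P.index = c.natAbs := by
      rw [hc, ← AddSubgroup.zmultiples_eq_closure, Int.index_zmultiples]
    have hPz : P = AddSubgroup.zmultiples ((P.index : ℤ)) := by
      rw [hcn, zmultiples_natAbs, hc, AddSubgroup.zmultiples_eq_closure]
    have hmem_a : ((P.index : ℤ)) ∈ P := by
      nth_rewrite 1 [hPz]
      exact AddSubgroup.mem_zmultiples ((P.index : ℤ))
    obtain ⟨⟨x, v⟩, hxv, hx⟩ := AddSubgroup.mem_map.mp hmem_a
    simp only [AddMonoidHom.coe_fst] at hx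
    subst hx
    have hdmem : K.index ∈ n.divisors := Nat.mem_divisors.mpr ⟨Dvd.intro_left _ hmul, hn⟩
    have ha_eq : n / K.index = P.index := by
      rw [← hmul, Nat.mul_div_cancel _ (Nat.pos_of_ne_zero hK0)]
    refine ⟨⟨⟨K.index, hdmem⟩, ⟨K, rfl⟩, QuotientAddGroup.mk v⟩, ?_⟩
    apply Subtype.ext
    show Phi ((n / K.index : ℕ) : ℤ) K (QuotientAddGroup.mk v) = H
    rw [ha_eq]
    ext ⟨y, b⟩
    rw [mem_Phi]
    constructor
    · rintro ⟨k, hk, hkv⟩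
      rw [← QuotientAddGroup.mk_zsmul, eq_comm, QuotientAddGroup.eq_iff_sub_mem] at hkv
      have h0 : ((0 : ℤ), b - k • v) ∈ H := hkv
      have h1 : k • (((P.index : ℕ) : ℤ), v) ∈ H := H.zsmul_mem hxv k
      have : (y, b) = k • (((P.index : ℕ) : ℤ), v) + ((0 : ℤ), b - k • v) := by
        rw [Prod.ext_iff]
        constructor
        · simp [← hk, smul_eq_mul]
        · simp
      rw [this]
      exact H.add_mem h1 h0
    · intro hyb
      have hyP : y ∈ P := AddSubgroup.mem_map.mpr ⟨(y, b), hyb, rfl⟩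
      rw [hPz] at hyP
      obtain ⟨k, hk⟩ := AddSubgroup.mem_zmultiples_iff.mp hyP
      refine ⟨k, by rw [← hk, smul_eq_mul], ?_⟩
      have h1 : ((0 : ℤ), b - k • v) ∈ H := by
        have : ((0 : ℤ), b - k • v) = (y, b) - k • (((P.index : ℕ) : ℤ), v) := by
          rw [Prod.ext_iff]
          constructor
          · simp [← hk, smul_eq_mul]
          · simp
        rw [this]
        exact H.sub_mem hyb (H.zsmul_mem hxv k)
      rw [← QuotientAddGroup.mk_zsmul, eq_comm, QuotientAddGroup.eq_iff_sub_mem]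
      exact h1

end Main

/-- `g ℓ n` is the number of (additive) subgroups of `ℤ^ℓ` of index `n`. -/
noncomputable def g (ℓ n : ℕ) : ℕ := Nat.card {H : AddSubgroup (Fin ℓ → ℤ) // H.index = n}

lemma quot_finite {m d : ℕ} (hd : d ≠ 0) (K : {K : AddSubgroup (Fin m → ℤ) // K.index = d}) :
    Finite ((Fin m → ℤ) ⧸ (K.1 : AddSubgroup (Fin m → ℤ))) :=
  Nat.finite_of_card_ne_zero (by rw [← AddSubgroup.index_eq_card, K.2]; exact hd)

lemma count_inner (m d : ℕ) (hd : d ≠ 0) :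
    Nat.card (Σ K : {K : AddSubgroup (Fin m → ℤ) // K.index = d},
      (Fin m → ℤ) ⧸ (K.1 : AddSubgroup (Fin m → ℤ))) = d * g m d := by
  haveI : Finite {K : AddSubgroup (Fin m → ℤ) // K.index = d} := finite_subgroups m d hd
  haveI : Fintype {K : AddSubgroup (Fin m → ℤ) // K.index = d} := Fintype.ofFinite _
  haveI : ∀ K : {K : AddSubgroup (Fin m → ℤ) // K.index = d},
      Finite ((Fin m → ℤ) ⧸ (K.1 : AddSubgroup (Fin m → ℤ))) := quot_finite hd
  rw [natCard_sigma]
  have hcongr : ∀ K : {K : AddSubgroup (Fin m → ℤ) // K.index = d},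
      Nat.card ((Fin m → ℤ) ⧸ (K.1 : AddSubgroup (Fin m → ℤ))) = d := fun K => by
    rw [← AddSubgroup.index_eq_card, K.2]
  rw [Finset.sum_congr rfl (fun K _ => hcongr K), Finset.sum_const, smul_eq_mul,
    Finset.card_univ, mul_comm]
  congr 1
  rw [g, Nat.card_eq_fintype_card]

theorem g_recursion (ℓ n : ℕ) (hℓ : 1 ≤ ℓ) (hn : 1 ≤ n) :
    g ℓ n = ∑ d ∈ n.divisors, d * g (ℓ - 1) d := by
  obtain ⟨m, rfl⟩ : ∃ m, ℓ = m + 1 := ⟨ℓ - 1, by omega⟩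
  have hn0 : n ≠ 0 := by omega
  simp only [Nat.add_sub_cancel]
  have h1 : g (m + 1) n
      = Nat.card {H : AddSubgroup (ℤ × (Fin m → ℤ)) // H.index = n} := by
    rw [g, card_subgroups_equiv (splitEquiv m) n]
  haveI hfin : ∀ d : ↥n.divisors, Finite (Σ K : {K : AddSubgroup (Fin m → ℤ) // K.index = (d : ℕ)},
      (Fin m → ℤ) ⧸ (K.1 : AddSubgroup (Fin m → ℤ))) := by
    intro d
    haveI := finite_subgroups m (d : ℕ) (Nat.pos_of_mem_divisors d.2).ne'
    haveI := quot_finite (m := m) (Nat.pos_of_mem_divisors d.2).ne'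
    infer_instance
  have h2 : Nat.card {H : AddSubgroup (ℤ × (Fin m → ℤ)) // H.index = n}
      = ∑ d : ↥n.divisors, Nat.card (Σ K : {K : AddSubgroup (Fin m → ℤ) // K.index = (d : ℕ)},
        (Fin m → ℤ) ⧸ (K.1 : AddSubgroup (Fin m → ℤ))) := by
    rw [← Nat.card_congr (Equiv.ofBijective _ (mainMap_bijective (B := Fin m → ℤ) n hn0))]
    exact natCard_sigma _
  rw [h1, h2]
  trans ∑ d : ↥n.divisors, (d : ℕ) * g m (d : ℕ)
  · exact Finset.sum_congr rfl
      (fun (d : ↥n.divisors) _ => count_inner m (d : ℕ) (Nat.pos_of_mem_divisors d.2).ne')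
  · exact Finset.sum_coe_sort n.divisors (fun d => d * g m d)
end

section
/- For a prime p and integers ℓ ≥ 1, m ≥ 1, the number of subgroups of Z^ℓ of index p^m equals ((p^ℓ - 1)(p^{ℓ+1} - 1) ⋯ (p^{ℓ+m-1} - 1)) / ((p - 1)(p^2 - 1) ⋯ (p^m - 1)). -/
open AddSubgroup Finset

section Core
variable {A : Type*} [AddCommGroup A]

/-- The subgroup of `ℤ × A` built from `d`, a subgroup `H` of `A`, and `c : A ⧸ H`. -/
def Ssub (d : ℕ) (H : AddSubgroup A) (c : A ⧸ H) : AddSubgroup (ℤ × A) where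
  carrier := {q | ∃ k : ℤ, q.1 = k * d ∧ (QuotientAddGroup.mk q.2 : A ⧸ H) = k • c}
  zero_mem' := ⟨0, by simp⟩
  add_mem' := by
    rintro a b ⟨k, hk1, hk2⟩ ⟨j, hj1, hj2⟩
    exact ⟨k + j, by simp only [Prod.fst_add, hk1, hj1]; ring,
      by simp [QuotientAddGroup.mk_add, hk2, hj2, add_smul]⟩
  neg_mem' := by
    rintro a ⟨k, hk1, hk2⟩
    exact ⟨-k, by simp [hk1], by simp [QuotientAddGroup.mk_neg, hk2]⟩

lemma mem_Ssub {d : ℕ} {H : AddSubgroup A} {c : A ⧸ H} {t : ℤ} {x : A} :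
    (t, x) ∈ Ssub d H c ↔ ∃ k : ℤ, t = k * d ∧ (QuotientAddGroup.mk x : A ⧸ H) = k • c :=
  Iff.rfl

lemma Ssub_le (d : ℕ) (H : AddSubgroup A) (c : A ⧸ H) :
    Ssub d H c ≤ (zmultiples (d : ℤ)).prod ⊤ := by
  rintro ⟨t, x⟩ ⟨k, hk1, hk2⟩
  refine ⟨mem_zmultiples_iff.mpr ⟨k, ?_⟩, trivial⟩
  simpa using hk1.symm

lemma dvd_of_mem_zmultiples {d t : ℤ} (h : t ∈ zmultiples d) : d ∣ t := by
  obtain ⟨k, hk⟩ := mem_zmultiples_iff.mp h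
  exact ⟨k, by simpa [mul_comm] using hk.symm⟩

lemma Ssub_index (d : ℕ) (hd : d ≠ 0) (H : AddSubgroup A) (c : A ⧸ H) :
    (Ssub d H c).index = d * H.index := by
  classical
  set K : AddSubgroup (ℤ × A) := (zmultiples (d : ℤ)).prod ⊤ with hK
  have hle : Ssub d H c ≤ K := Ssub_le d H c
  have hdz : (d : ℤ) ≠ 0 := by exact_mod_cast hd
  -- the homomorphism from K to A ⧸ H
  let f : K →+ A ⧸ H := AddMonoidHom.mk'
    (fun q => (QuotientAddGroup.mk q.1.2 : A ⧸ H) - (q.1.1 / d) • c)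
    (by
      rintro ⟨⟨t, x⟩, ht, -⟩ ⟨⟨s, y⟩, hs, -⟩
      obtain ⟨k, hk⟩ : (d : ℤ) ∣ t := dvd_of_mem_zmultiples ht
      obtain ⟨j, hj⟩ : (d : ℤ) ∣ s := dvd_of_mem_zmultiples hs
      have h2 : t / d = k := by rw [hk, Int.mul_ediv_cancel_left _ hdz]
      have h3 : s / d = j := by rw [hj, Int.mul_ediv_cancel_left _ hdz]
      have h4 : (t + s) / d = k + j := by
        rw [hk, hj, ← mul_add, Int.mul_ediv_cancel_left _ hdz]
      show (QuotientAddGroup.mk (x + y) : A ⧸ H) - ((t + s) / d) • c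
          = (QuotientAddGroup.mk x : A ⧸ H) - (t / d) • c
            + ((QuotientAddGroup.mk y : A ⧸ H) - (s / d) • c)
      rw [h2, h3, h4, QuotientAddGroup.mk_add, add_smul]
      abel)
  have hker : f.ker = (Ssub d H c).addSubgroupOf K := by
    ext ⟨⟨t, x⟩, ht, -⟩
    obtain ⟨k, hk⟩ : (d : ℤ) ∣ t := dvd_of_mem_zmultiples ht
    have h2 : t / d = k := by rw [hk, Int.mul_ediv_cancel_left _ hdz]
    simp only [AddMonoidHom.mem_ker, AddMonoidHom.mk'_apply, mem_addSubgroupOf, f,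
      sub_eq_zero, h2]
    constructor
    · intro h; exact ⟨k, by rw [hk, mul_comm], h⟩
    · rintro ⟨j, hj1, hj2⟩
      have hj1' : t = j * d := hj1
      have hjk : j = k := by
        have : j * (d : ℤ) = k * d := by rw [← hj1', hk, mul_comm]
        exact mul_right_cancel₀ hdz this
      rw [hj2, hjk]
  have hsurj : Function.Surjective f := by
    intro q
    obtain ⟨x, rfl⟩ := QuotientAddGroup.mk_surjective q
    refine ⟨⟨(0, x), ⟨mem_zmultiples_iff.mpr ⟨0, by simp⟩, trivial⟩⟩, ?_⟩
    simp [f]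
  have hrel : (Ssub d H c).relIndex K = H.index := by
    rw [relIndex, ← hker, AddSubgroup.index_ker, AddMonoidHom.range_eq_top.mpr hsurj]
    rw [Nat.card_congr AddSubgroup.topEquiv.toEquiv]
    rfl
  have hKi : K.index = d := by
    have : ((zmultiples ((d : ℤ))).prod (⊤ : AddSubgroup A)).index
        = (zmultiples ((d : ℤ))).index * (⊤ : AddSubgroup A).index := by simp
    rw [hK, this, AddSubgroup.index_top, mul_one, Int.index_zmultiples, Int.natAbs_natCast]
  rw [← relIndex_mul_index hle, hrel, hKi, mul_comm]

end Core

section Core3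
variable {A : Type*} [AddCommGroup A]

lemma Ssub_map_fst (d : ℕ) (H : AddSubgroup A) (c : A ⧸ H) :
    (Ssub d H c).map (AddMonoidHom.fst ℤ A) = zmultiples (d : ℤ) := by
  ext t
  simp only [AddSubgroup.mem_map, mem_zmultiples_iff]
  constructor
  · rintro ⟨⟨s, y⟩, ⟨k, hk1, hk2⟩, rfl⟩
    exact ⟨k, by simpa using hk1.symm⟩
  · rintro ⟨k, hk⟩
    obtain ⟨x, hx⟩ := QuotientAddGroup.mk_surjective (k • c)
    exact ⟨(t, x), ⟨k, by simpa using hk.symm, hx⟩, rfl⟩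

lemma Ssub_comap_inr {d : ℕ} (hd : d ≠ 0) (H : AddSubgroup A) (c : A ⧸ H) :
    (Ssub d H c).comap (AddMonoidHom.inr ℤ A) = H := by
  have hdz : (d : ℤ) ≠ 0 := by exact_mod_cast hd
  ext x
  simp only [AddSubgroup.mem_comap, AddMonoidHom.inr_apply]
  constructor
  · rintro ⟨k, hk1, hk2⟩
    have hk1' : (0 : ℤ) = k * d := hk1
    have hk0 : k = 0 := by
      rcases mul_eq_zero.mp hk1'.symm with h | h
      · exact h
      · exact absurd h hdz
    rw [hk0, zero_smul] at hk2
    exact (QuotientAddGroup.eq_zero_iff x).mp hk2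
  · intro hx
    exact ⟨0, by simp, by simpa [QuotientAddGroup.eq_zero_iff] using hx⟩

lemma Ssub_mem_d {d : ℕ} (hd : d ≠ 0) (H : AddSubgroup A) (c : A ⧸ H) (x : A) :
    ((d : ℤ), x) ∈ Ssub d H c ↔ (QuotientAddGroup.mk x : A ⧸ H) = c := by
  have hdz : (d : ℤ) ≠ 0 := by exact_mod_cast hd
  constructor
  · rintro ⟨k, hk1, hk2⟩
    have : (1 : ℤ) * d = k * d := by rw [one_mul]; exact hk1
    have hk : k = 1 := (mul_right_cancel₀ hdz this).symm
    rw [hk, one_smul] at hk2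
    exact hk2
  · intro hx
    exact ⟨1, by rw [one_mul], by rw [one_smul]; exact hx⟩

lemma exists_Ssub (H0 : AddSubgroup (ℤ × A)) (h : H0.index ≠ 0) :
    ∃ (d : ℕ) (H : AddSubgroup A) (c : A ⧸ H), d ≠ 0 ∧ H0 = Ssub d H c := by
  obtain ⟨a, ha⟩ := Int.subgroup_cyclic (H0.map (AddMonoidHom.fst ℤ A))
  rw [← AddSubgroup.zmultiples_eq_closure] at ha
  set d := a.natAbs with hdd
  have hmap : H0.map (AddMonoidHom.fst ℤ A) = zmultiples (d : ℤ) := by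
    rw [ha, Int.zmultiples_natAbs]
  have hd : d ≠ 0 := by
    intro hd0
    have hz : H0.map (AddMonoidHom.fst ℤ A) = ⊥ := by
      rw [hmap, hd0]; simp
    have hle : H0 ≤ (⊥ : AddSubgroup ℤ).prod ⊤ := by
      rintro ⟨t, x⟩ htx
      refine ⟨?_, trivial⟩
      have : t ∈ H0.map (AddMonoidHom.fst ℤ A) := ⟨(t, x), htx, rfl⟩
      rw [hz] at this
      exact this
    have hdvd := AddSubgroup.index_dvd_of_le hle
    have : ((⊥ : AddSubgroup ℤ).prod (⊤ : AddSubgroup A)).index = 0 := by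
      have h1 : ((⊥ : AddSubgroup ℤ).prod (⊤ : AddSubgroup A)).index
          = (⊥ : AddSubgroup ℤ).index * (⊤ : AddSubgroup A).index := by simp
      rw [h1, AddSubgroup.index_bot, Nat.card_eq_zero_of_infinite, zero_mul]
    rw [this] at hdvd
    exact h (zero_dvd_iff.mp hdvd)
  have hdm : ((d : ℤ)) ∈ H0.map (AddMonoidHom.fst ℤ A) := by
    rw [hmap]
    exact mem_zmultiples _
  obtain ⟨⟨t, x⟩, htx, ht⟩ := hdm
  have ht' : t = (d : ℤ) := ht
  subst ht'
  set H : AddSubgroup A := H0.comap (AddMonoidHom.inr ℤ A) with hH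
  refine ⟨d, H, QuotientAddGroup.mk x, hd, ?_⟩
  have hdz : (d : ℤ) ≠ 0 := by exact_mod_cast hd
  ext ⟨s, y⟩
  constructor
  · intro hs
    have hsm : s ∈ H0.map (AddMonoidHom.fst ℤ A) := ⟨(s, y), hs, rfl⟩
    rw [hmap] at hsm
    obtain ⟨k, hk⟩ : (d : ℤ) ∣ s := dvd_of_mem_zmultiples hsm
    refine ⟨k, by rw [hk, mul_comm], ?_⟩
    have hmem : ((0 : ℤ), y - k • x) ∈ H0 := by
      have h1 : ((s, y) - k • ((d : ℤ), x)) ∈ H0 :=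
        AddSubgroup.sub_mem _ hs (AddSubgroup.zsmul_mem _ htx k)
      have h2 : ((s, y) - k • ((d : ℤ), x)) = (s - k * d, y - k • x) := by
        simp [Prod.ext_iff, smul_eq_mul]
      rw [h2] at h1
      have h3 : s - k * d = 0 := by rw [hk]; ring
      rw [h3] at h1
      exact h1
    have : y - k • x ∈ H := hmem
    have := (QuotientAddGroup.eq_zero_iff _).mpr this
    rw [QuotientAddGroup.mk_sub] at this
    have := sub_eq_zero.mp this
    rw [this]
    simp [QuotientAddGroup.mk_zsmul]
  · rintro ⟨k, hk1, hk2⟩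
    have hk1' : s = k * d := hk1
    have hk2' : (QuotientAddGroup.mk (y - k • x) : A ⧸ H) = 0 := by
      rw [QuotientAddGroup.mk_sub, QuotientAddGroup.mk_zsmul, sub_eq_zero]
      exact hk2
    have hyH : y - k • x ∈ H := (QuotientAddGroup.eq_zero_iff _).mp hk2'
    have h1 : ((0 : ℤ), y - k • x) ∈ H0 := hyH
    have h2 : k • ((d : ℤ), x) ∈ H0 := AddSubgroup.zsmul_mem _ htx k
    have h3 := AddSubgroup.add_mem _ h1 h2
    have h4 : ((0 : ℤ), y - k • x) + k • ((d : ℤ), x) = (s, y) := by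
      have : k • ((d : ℤ), x) = (k * d, k • x) := by simp [Prod.ext_iff, smul_eq_mul]
      rw [this, Prod.mk_add_mk, Prod.ext_iff]
      constructor
      · simpa using hk1'.symm
      · rw [sub_add_cancel]
    rwa [h4] at h3

end Core3

section Count
variable {A : Type*} [AddCommGroup A]

lemma nat_card_sigma {ι : Type*} [Fintype ι] (f : ι → Type*) [∀ i, Finite (f i)] :
    Nat.card (Σ i, f i) = ∑ i, Nat.card (f i) := by
  classical
  haveI : ∀ i, Fintype (f i) := fun i => Fintype.ofFinite _
  simp [Nat.card_eq_fintype_card, Fintype.card_sigma]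

lemma count_step (p m : ℕ) (hp : p.Prime)
    (hfin : ∀ k : ℕ, Finite {H : AddSubgroup A // H.index = p ^ k}) :
    Nat.card {H0 : AddSubgroup (ℤ × A) // H0.index = p ^ m}
        = ∑ k ∈ Finset.range (m + 1),
            Nat.card {H : AddSubgroup A // H.index = p ^ k} * p ^ k
      ∧ Finite {H0 : AddSubgroup (ℤ × A) // H0.index = p ^ m} := by
  classical
  have hp0 : p ≠ 0 := hp.ne_zero
  -- the sigma type
  let T := Σ k : Fin (m + 1), Σ H : {H : AddSubgroup A // H.index = p ^ (k : ℕ)}, A ⧸ (H.1)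
  -- finiteness of the sigma type
  haveI hq : ∀ (k : Fin (m + 1)) (H : {H : AddSubgroup A // H.index = p ^ (k : ℕ)}),
      Finite (A ⧸ (H.1)) := by
    intro k H
    apply Nat.finite_of_card_ne_zero
    rw [← AddSubgroup.index_eq_card, H.2]
    exact pow_ne_zero _ hp0
  haveI hfin' : ∀ k : Fin (m + 1), Finite {H : AddSubgroup A // H.index = p ^ (k : ℕ)} :=
    fun k => hfin k
  haveI hTfin : Finite T := by
    apply Finite.instSigma
  -- the map
  have hd0 : ∀ k : Fin (m + 1), (p ^ (m - (k : ℕ)) : ℕ) ≠ 0 := fun k => pow_ne_zero _ hp0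
  let Φ : T → {H0 : AddSubgroup (ℤ × A) // H0.index = p ^ m} := fun q =>
    ⟨Ssub (p ^ (m - (q.1 : ℕ))) q.2.1.1 q.2.2, by
      rw [Ssub_index _ (hd0 q.1) _ _, q.2.1.2, ← pow_add,
        Nat.sub_add_cancel (Nat.lt_succ_iff.mp q.1.isLt)]⟩
  have hinj : Function.Injective Φ := by
    rintro ⟨k, ⟨H, hH⟩, c⟩ ⟨k', ⟨H', hH'⟩, c'⟩ hab
    have hab' : Ssub (p ^ (m - (k : ℕ))) H c = Ssub (p ^ (m - (k' : ℕ))) H' c' :=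
      Subtype.ext_iff.mp hab
    -- first components agree
    have hd : p ^ (m - (k : ℕ)) = p ^ (m - (k' : ℕ)) := by
      have h1 := Ssub_map_fst (p ^ (m - (k : ℕ))) H c
      have h2 := Ssub_map_fst (p ^ (m - (k' : ℕ))) H' c'
      rw [hab', h2] at h1
      have := congrArg AddSubgroup.index h1
      rw [Int.index_zmultiples, Int.index_zmultiples, Int.natAbs_natCast,
        Int.natAbs_natCast] at this
      exact this.symm
    have hkk' : (k : ℕ) = (k' : ℕ) := by
      have h1 := Nat.pow_right_injective hp.two_le hd
      have h2 := Nat.lt_succ_iff.mp k.isLt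
      have h3 := Nat.lt_succ_iff.mp k'.isLt
      omega
    have hk : k = k' := Fin.ext hkk'
    subst hk
    have hHH' : H = H' := by
      rw [← Ssub_comap_inr (hd0 k) H c, hab', Ssub_comap_inr (hd0 k) H' c']
    subst hHH'
    have hcc' : c = c' := by
      obtain ⟨x, hx⟩ := QuotientAddGroup.mk_surjective c
      have h1 : (((p ^ (m - (k : ℕ)) : ℕ) : ℤ), x) ∈ Ssub (p ^ (m - (k : ℕ))) H c :=
        (Ssub_mem_d (hd0 k) H c x).mpr hx
      rw [hab'] at h1
      have h2 := (Ssub_mem_d (hd0 k) H c' x).mp h1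
      rw [← hx, h2]
    subst hcc'
    rfl
  have hsurj : Function.Surjective Φ := by
    rintro ⟨H0, hH0⟩
    have hne : H0.index ≠ 0 := by rw [hH0]; exact pow_ne_zero _ hp0
    obtain ⟨d, H, c, hd, rfl⟩ := exists_Ssub H0 hne
    have hidx : d * H.index = p ^ m := by rw [← Ssub_index d hd H c, hH0]
    have hdvd : d ∣ p ^ m := ⟨H.index, hidx.symm⟩
    obtain ⟨j, hj, rfl⟩ := (Nat.dvd_prime_pow hp).mp hdvd
    have hHidx : H.index = p ^ (m - j) := by
      have hcalc : p ^ j * H.index = p ^ j * p ^ (m - j) := by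
        rw [← pow_add, Nat.add_sub_cancel' hj]; exact hidx
      exact Nat.eq_of_mul_eq_mul_left (pow_pos hp.pos _) hcalc
    have hkm : m - j < m + 1 := by omega
    have hmmj : m - (m - j) = j := by omega
    refine ⟨⟨⟨m - j, hkm⟩, ⟨H, hHidx⟩, c⟩, ?_⟩
    apply Subtype.ext
    show Ssub (p ^ (m - (m - j))) H c = Ssub (p ^ j) H c
    rw [hmmj]
  have hbij : Function.Bijective Φ := ⟨hinj, hsurj⟩
  constructor
  · rw [← Nat.card_eq_of_bijective Φ hbij]
    haveI : ∀ k : Fin (m + 1), Fintype {H : AddSubgroup A // H.index = p ^ (k : ℕ)} :=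
      fun k => Fintype.ofFinite _
    rw [nat_card_sigma]
    rw [← Fin.sum_univ_eq_sum_range
      (fun k => Nat.card {H : AddSubgroup A // H.index = p ^ k} * p ^ k)]
    refine Finset.sum_congr rfl fun k _ => ?_
    rw [nat_card_sigma]
    have hcard : ∀ H : {H : AddSubgroup A // H.index = p ^ (k : ℕ)},
        Nat.card (A ⧸ (H.1)) = p ^ (k : ℕ) := fun H => by
      rw [← AddSubgroup.index_eq_card, H.2]
    rw [Finset.sum_congr rfl fun H _ => hcard H, Finset.sum_const, Finset.card_univ,
      smul_eq_mul, Nat.card_eq_fintype_card]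
  · exact Finite.of_surjective Φ hsurj

end Count

section Transfer
variable {G G' : Type*} [AddGroup G] [AddGroup G']

/-- Transporting subgroups of a given index along an additive equivalence. -/
def subEquiv (e : G ≃+ G') (n : ℕ) :
    {H : AddSubgroup G // H.index = n} ≃ {H' : AddSubgroup G' // H'.index = n} where
  toFun H := ⟨H.1.comap e.symm.toAddMonoidHom, by
    rw [AddSubgroup.index_comap_of_surjective _ e.symm.surjective, H.2]⟩
  invFun H' := ⟨H'.1.comap e.toAddMonoidHom, by
    rw [AddSubgroup.index_comap_of_surjective _ e.surjective, H'.2]⟩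
  left_inv H := by
    apply Subtype.ext
    show (H.1.comap e.symm.toAddMonoidHom).comap e.toAddMonoidHom = H.1
    rw [AddSubgroup.comap_comap]
    have : (e.symm.toAddMonoidHom.comp e.toAddMonoidHom) = AddMonoidHom.id G := by
      ext x; simp
    rw [this, AddSubgroup.comap_id]
  right_inv H' := by
    apply Subtype.ext
    show (H'.1.comap e.toAddMonoidHom).comap e.symm.toAddMonoidHom = H'.1
    rw [AddSubgroup.comap_comap]
    have : (e.toAddMonoidHom.comp e.symm.toAddMonoidHom) = AddMonoidHom.id G' := by
      ext x; simp
    rw [this, AddSubgroup.comap_id]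

end Transfer

/-- The equivalence `ℤ^{ℓ+1} ≃+ ℤ × ℤ^ℓ`. -/
def piSuccEquiv (ℓ : ℕ) : (Fin (ℓ + 1) → ℤ) ≃+ ℤ × (Fin ℓ → ℤ) :=
  { (Fin.consEquiv fun _ : Fin (ℓ + 1) => ℤ).symm with map_add' := fun f g => rfl }

/-- The counting function defined by the recursion coming from the zeta function of `ℤ^ℓ`. -/
def Bg (p : ℕ) : ℕ → ℕ → ℕ
  | 0, 0 => 1
  | 0, _ + 1 => 0
  | ℓ + 1, m => ∑ k ∈ Finset.range (m + 1), Bg p ℓ k * p ^ k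

lemma Bg_zero (p ℓ : ℕ) : Bg p ℓ 0 = 1 := by
  induction ℓ with
  | zero => rfl
  | succ ℓ ih => simp [Bg, ih]

lemma key_count (p : ℕ) (hp : p.Prime) (ℓ : ℕ) :
    (∀ m : ℕ, Finite {H : AddSubgroup (Fin ℓ → ℤ) // H.index = p ^ m}) ∧
      (∀ m : ℕ, Nat.card {H : AddSubgroup (Fin ℓ → ℤ) // H.index = p ^ m} = Bg p ℓ m) := by
  induction ℓ with
  | zero =>
    haveI hsub : Subsingleton (AddSubgroup (Fin 0 → ℤ)) := by
      constructor
      intro H K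
      ext x
      have hx : x = 0 := funext fun i => i.elim0
      subst hx
      exact iff_of_true H.zero_mem K.zero_mem
    have hidx : ∀ H : AddSubgroup (Fin 0 → ℤ), H.index = 1 := by
      intro H
      have : H = ⊤ := Subsingleton.elim H ⊤
      rw [this, AddSubgroup.index_top]
    constructor
    · intro m
      exact Finite.of_injective (fun H => H.1) fun a b h => Subtype.ext (Subsingleton.elim _ _)
    · intro m
      cases m with
      | zero =>
        rw [pow_zero]
        have : Nat.card {H : AddSubgroup (Fin 0 → ℤ) // H.index = 1} = 1 := by
          haveI : Unique {H : AddSubgroup (Fin 0 → ℤ) // H.index = 1} :=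
            { default := ⟨⊤, AddSubgroup.index_top⟩,
              uniq := fun H => Subtype.ext (Subsingleton.elim _ _) }
          exact Nat.card_unique
        rw [this]; rfl
      | succ m =>
        have hne : p ^ (m + 1) ≠ 1 := by
          have := hp.two_le
          have : 2 ^ (m + 1) ≤ p ^ (m + 1) := Nat.pow_le_pow_left this _
          have h2 : 2 ≤ 2 ^ (m + 1) := by
            calc 2 = 2 ^ 1 := rfl
            _ ≤ 2 ^ (m + 1) := Nat.pow_le_pow_right (by norm_num) (by omega)
          omega
        haveI : IsEmpty {H : AddSubgroup (Fin 0 → ℤ) // H.index = p ^ (m + 1)} := by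
          constructor
          rintro ⟨H, hH⟩
          rw [hidx H] at hH
          exact hne hH.symm
        rw [Nat.card_of_isEmpty]
        rfl
  | succ ℓ ih =>
    obtain ⟨ihfin, ihcard⟩ := ih
    have etrans := fun m : ℕ => subEquiv (piSuccEquiv ℓ) (p ^ m)
    have hstep := fun m : ℕ => count_step (A := Fin ℓ → ℤ) p m hp ihfin
    constructor
    · intro m
      haveI := (hstep m).2
      exact Finite.of_equiv _ (etrans m).symm
    · intro m
      rw [Nat.card_congr (etrans m), (hstep m).1]
      show _ = Bg p (ℓ + 1) m
      rw [show Bg p (ℓ + 1) m = ∑ k ∈ Finset.range (m + 1), Bg p ℓ k * p ^ k from rfl]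
      exact Finset.sum_congr rfl fun k _ => by rw [ihcard k]

lemma pow_sub_one_key (p ℓ m : ℕ) (hp : 2 ≤ p) :
    (p ^ (m + 1) - 1) + p ^ (m + 1) * (p ^ ℓ - 1) = p ^ (ℓ + m + 1) - 1 := by
  have h1 : 1 ≤ p ^ (m + 1) := Nat.one_le_pow _ _ (by omega)
  have h2 : 1 ≤ p ^ ℓ := Nat.one_le_pow _ _ (by omega)
  have h3 : p ^ (m + 1) * p ^ ℓ = p ^ (ℓ + m + 1) := by
    rw [← pow_add]; ring_nf
  have h4 : 1 ≤ p ^ (ℓ + m + 1) := Nat.one_le_pow _ _ (by omega)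
  zify [h1, h2, h4]
  rw [show ℓ + m + 1 = (m + 1) + ℓ from by omega, pow_add]
  ring

lemma Bg_mul (p : ℕ) (hp : 2 ≤ p) (ℓ : ℕ) :
    ∀ m : ℕ, Bg p ℓ m * ∏ i ∈ Finset.range m, (p ^ (i + 1) - 1)
      = ∏ i ∈ Finset.range m, (p ^ (ℓ + i) - 1) := by
  induction ℓ with
  | zero =>
    intro m
    cases m with
    | zero => simp [Bg]
    | succ m =>
      rw [show Bg p 0 (m + 1) = 0 from rfl, zero_mul]
      symm
      apply Finset.prod_eq_zero (Finset.mem_range.mpr (Nat.succ_pos m))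
      simp
  | succ ℓ ih =>
    intro m
    induction m with
    | zero => simp [Bg_zero]
    | succ m ihm =>
      have hB : Bg p (ℓ + 1) (m + 1) = Bg p (ℓ + 1) m + Bg p ℓ (m + 1) * p ^ (m + 1) := by
        show (∑ k ∈ Finset.range (m + 2), Bg p ℓ k * p ^ k) = _
        rw [Finset.sum_range_succ]
        rfl
      have hD : ∏ i ∈ Finset.range (m + 1), (p ^ (i + 1) - 1)
          = (∏ i ∈ Finset.range m, (p ^ (i + 1) - 1)) * (p ^ (m + 1) - 1) :=
        Finset.prod_range_succ _ _
      have hN : ∏ i ∈ Finset.range (m + 1), (p ^ (ℓ + 1 + i) - 1)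
          = (∏ i ∈ Finset.range m, (p ^ (ℓ + 1 + i) - 1)) * (p ^ (ℓ + 1 + m) - 1) :=
        Finset.prod_range_succ _ _
      have hshift : ∏ i ∈ Finset.range (m + 1), (p ^ (ℓ + i) - 1)
          = (p ^ ℓ - 1) * ∏ i ∈ Finset.range m, (p ^ (ℓ + 1 + i) - 1) := by
        rw [Finset.prod_range_succ']
        have e1 : p ^ (ℓ + 0) - 1 = p ^ ℓ - 1 := by norm_num
        rw [e1, mul_comm]
        congr 1
        apply Finset.prod_congr rfl
        intro i _
        congr 2
        omega
      have hkey := pow_sub_one_key p ℓ m hp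
      calc Bg p (ℓ + 1) (m + 1) * ∏ i ∈ Finset.range (m + 1), (p ^ (i + 1) - 1)
          = (Bg p (ℓ + 1) m * ∏ i ∈ Finset.range m, (p ^ (i + 1) - 1)) * (p ^ (m + 1) - 1)
            + p ^ (m + 1) * (Bg p ℓ (m + 1) * ∏ i ∈ Finset.range (m + 1), (p ^ (i + 1) - 1)) := by
            rw [hB, hD]; ring
        _ = (∏ i ∈ Finset.range m, (p ^ (ℓ + 1 + i) - 1)) * (p ^ (m + 1) - 1)
            + p ^ (m + 1) * ((p ^ ℓ - 1) * ∏ i ∈ Finset.range m, (p ^ (ℓ + 1 + i) - 1)) := by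
            rw [ihm, ih (m + 1), hshift]
        _ = (∏ i ∈ Finset.range m, (p ^ (ℓ + 1 + i) - 1))
              * ((p ^ (m + 1) - 1) + p ^ (m + 1) * (p ^ ℓ - 1)) := by ring
        _ = ∏ i ∈ Finset.range (m + 1), (p ^ (ℓ + 1 + i) - 1) := by
            rw [hkey, show ℓ + m + 1 = ℓ + 1 + m from by omega, hN]

theorem g_prime_power (p ℓ m : ℕ) (hp : p.Prime) (hℓ : 1 ≤ ℓ) (hm : 1 ≤ m) :
    g ℓ (p ^ m) * ∏ i ∈ Finset.range m, (p ^ (i + 1) - 1) =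
      ∏ i ∈ Finset.range m, (p ^ (ℓ + i) - 1) := by
  have hcard := (key_count p hp ℓ).2 m
  rw [g, hcard]
  exact Bg_mul p hp.two_le ℓ m
end

section
/- The normalized count N_ℓ(n) of ℓ-tuples of pairwise commuting permutations in S_n satisfies the recursion n · N_ℓ(n) = Σ_{k=1}^{n} g_ℓ(k) · N_ℓ(n-k), with N_ℓ(0) = 1, where g_ℓ(k) is the number of subgroups of Z^ℓ of index k. -/
open Function

section Gen

variable {ℓ : ℕ} {M : Type*} [Group M]

local notation "A" => (Fin ℓ → ℤ)
local notation "G" => Multiplicative (Fin ℓ → ℤ)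

lemma addClosure_singles : AddSubgroup.closure (Set.range fun i : Fin ℓ => Pi.single i (1:ℤ)) = ⊤ := by
  rw [eq_top_iff]
  intro x _
  have hx : x = ∑ i : Fin ℓ, x i • Pi.single i (1:ℤ) := by
    funext j
    simp [Finset.sum_apply, Pi.single_apply, Finset.sum_ite_eq']
  rw [hx]
  exact AddSubgroup.sum_mem _ fun i _ =>
    AddSubgroup.zsmul_mem _ (AddSubgroup.subset_closure (Set.mem_range_self i)) _

lemma mulClosure_singles :
    Subgroup.closure (Set.range fun i : Fin ℓ =>
      Multiplicative.ofAdd (Pi.single i (1:ℤ))) = ⊤ := by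
  rw [eq_top_iff]
  intro x _
  have key : ∀ y : Fin ℓ → ℤ, y ∈ AddSubgroup.closure (Set.range fun i : Fin ℓ => Pi.single i (1:ℤ)) →
      Multiplicative.ofAdd y ∈ Subgroup.closure (Set.range fun i : Fin ℓ =>
        Multiplicative.ofAdd (Pi.single i (1:ℤ))) := by
    intro y hy
    induction hy using AddSubgroup.closure_induction with
    | mem z hz => exact Subgroup.subset_closure (by obtain ⟨i, rfl⟩ := hz; exact Set.mem_range_self i)
    | zero => exact one_mem _
    | add z w _ _ hz hw => exact mul_mem hz hw
    | neg z _ hz => exact inv_mem hz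
  have := key x.toAdd (by rw [addClosure_singles]; trivial)
  simpa using this

lemma hom_ext {φ ψ : G →* M}
    (h : ∀ i : Fin ℓ, φ (Multiplicative.ofAdd (Pi.single i (1:ℤ)))
      = ψ (Multiplicative.ofAdd (Pi.single i (1:ℤ)))) : φ = ψ :=
  MonoidHom.eq_of_eqOn_dense mulClosure_singles (by rintro x ⟨i, rfl⟩; exact h i)

instance finiteHom [Finite M] : Finite (G →* M) := by
  have : Function.Injective (fun φ : G →* M =>
      fun i : Fin ℓ => φ (Multiplicative.ofAdd (Pi.single i (1:ℤ)))) := by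
    intro φ ψ h
    exact hom_ext fun i => congrFun h i
  exact Finite.of_injective _ this

end Gen

open Function Equiv

section Bij

variable {G : Type*} [Group G] {n : ℕ}

/-- Conjugation of permutations along an equivalence, as a monoid hom. -/
def permCongrHom {α β : Type*} (e : α ≃ β) : Perm α →* Perm β where
  toFun := e.permCongr
  map_one' := by ext x; simp
  map_mul' p q := by ext x; simp [Equiv.permCongr_apply]

@[simp] lemma permCongrHom_apply {α β : Type*} (e : α ≃ β) (p : Perm α) (x : β) :
    _root_.permCongrHom e p x = e (p (e.symm x)) := rfl

/-- The data side of the bijection. -/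
abbrev T (G : Type*) [Group G] (n : ℕ) : Type _ :=
  Σ H : {H : Subgroup G // 1 ≤ H.index ∧ H.index ≤ n},
  Σ ι : (G ⧸ H.1) ↪ Fin n, (G →* Perm ↥(Set.range ⇑ι)ᶜ)

open scoped Classical in
/-- Glue the coset action on the range of `ι` with `ψ` on the complement. -/
noncomputable def glue (H : Subgroup G) (ι : (G ⧸ H) ↪ Fin n)
    (ψ : G →* Perm ↥(Set.range ⇑ι)ᶜ) : G →* Perm (Fin n) :=
  (Equiv.Perm.subtypeCongrHom (· ∈ Set.range ⇑ι)).comp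
    (((_root_.permCongrHom (Equiv.ofInjective ⇑ι ι.injective)).comp
        (MulAction.toPermHom G (G ⧸ H))).prod ψ)

lemma glue_apply_mem (H : Subgroup G) (ι : (G ⧸ H) ↪ Fin n)
    (ψ : G →* Perm ↥(Set.range ⇑ι)ᶜ) (g : G) (q : G ⧸ H) :
    glue H ι ψ g (ι q) = ι (g • q) := by
  classical
  have hmem : (ι q) ∈ Set.range ⇑ι := ⟨q, rfl⟩
  show Equiv.Perm.subtypeCongr _ _ (ι q) = _
  rw [Equiv.Perm.subtypeCongr.left_apply _ _ hmem]
  simp only [MonoidHom.prod_apply, MonoidHom.comp_apply, permCongrHom_apply]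
  have h1 : (Equiv.ofInjective ⇑ι ι.injective).symm ⟨ι q, hmem⟩ = q := by
    apply (Equiv.ofInjective ⇑ι ι.injective).injective
    simp [Equiv.apply_ofInjective_symm]
  rw [h1]
  simp [MulAction.toPermHom_apply]

lemma glue_apply_not_mem (H : Subgroup G) (ι : (G ⧸ H) ↪ Fin n)
    (ψ : G →* Perm ↥(Set.range ⇑ι)ᶜ) (g : G) (y : Fin n) (hy : y ∉ Set.range ⇑ι) :
    glue H ι ψ g y = ↑(ψ g ⟨y, hy⟩) := by
  classical
  show Equiv.Perm.subtypeCongr _ _ y = _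
  rw [Equiv.Perm.subtypeCongr.right_apply _ _ hy]
  rfl

/-- The reconstruction map. -/
noncomputable def R : T G n → Fin n × (G →* Perm (Fin n)) :=
  fun t => (t.2.1 ((1 : G) : G ⧸ t.1.1), glue t.1.1 t.2.1 t.2.2)

lemma glue_fixes_iff (H : Subgroup G) (ι : (G ⧸ H) ↪ Fin n)
    (ψ : G →* Perm ↥(Set.range ⇑ι)ᶜ) (g : G) :
    glue H ι ψ g (ι ((1 : G) : G ⧸ H)) = ι ((1 : G) : G ⧸ H) ↔ g ∈ H := by
  rw [glue_apply_mem]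
  constructor
  · intro hg
    have h2 := ι.injective hg
    rw [MulAction.Quotient.smul_mk] at h2
    have := QuotientGroup.eq.mp h2
    simpa using this
  · intro hg
    congr 1
    rw [MulAction.Quotient.smul_mk]
    exact QuotientGroup.eq.mpr (by simpa using inv_mem hg)

lemma R_injective : Function.Injective (R (G := G) (n := n)) := by
  rintro ⟨⟨H, hH⟩, ι, ψ⟩ ⟨⟨H', hH'⟩, ι', ψ'⟩ h
  rw [Prod.ext_iff] at h
  obtain ⟨hx, hφ⟩ := h
  simp only [R] at hx hφ
  have hHH : H = H' := by
    ext g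
    rw [← glue_fixes_iff H ι ψ g, ← glue_fixes_iff H' ι' ψ' g, hφ, hx]
  subst hHH
  have hι : ι = ι' := by
    ext q
    induction q using QuotientGroup.induction_on with
    | H g =>
      have e1 : ι ((g : G) : G ⧸ H) = glue H ι ψ g (ι ((1:G) : G ⧸ H)) := by
        rw [glue_apply_mem, MulAction.Quotient.smul_mk, smul_eq_mul, mul_one]
      have e2 : ι' ((g : G) : G ⧸ H) = glue H ι' ψ' g (ι' ((1:G) : G ⧸ H)) := by
        rw [glue_apply_mem, MulAction.Quotient.smul_mk, smul_eq_mul, mul_one]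
      rw [e1, e2, hφ, hx]
  subst hι
  have hψ : ψ = ψ' := by
    refine MonoidHom.ext fun g => Equiv.ext fun y => Subtype.ext ?_
    have h1 := glue_apply_not_mem H ι ψ g y.1 y.2
    have h2 := glue_apply_not_mem H ι ψ' g y.1 y.2
    rw [hφ] at h1
    simpa using h1.symm.trans h2
  rw [hψ]

end Bij
section Surj

variable {G : Type*} [Group G] {n : ℕ}

/-- Stabilizer of `x` under the action through `φ`. -/
def stab (φ : G →* Equiv.Perm (Fin n)) (x : Fin n) : Subgroup G :=
  (MulAction.stabilizer (Equiv.Perm (Fin n)) x).comap φ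

lemma mem_stab {φ : G →* Equiv.Perm (Fin n)} {x : Fin n} {g : G} :
    g ∈ stab φ x ↔ φ g x = x := by
  simp [stab, MulAction.mem_stabilizer_iff, Equiv.Perm.smul_def]

lemma phi_mul_apply (φ : G →* Equiv.Perm (Fin n)) (a b : G) (x : Fin n) :
    φ a (φ b x) = φ (a * b) x := by rw [map_mul]; rfl

/-- The orbit map `G ⧸ stab φ x → Fin n`. -/
def orbitMap (φ : G →* Equiv.Perm (Fin n)) (x : Fin n) : G ⧸ stab φ x → Fin n :=
  fun q => Quotient.liftOn' q (fun g => φ g x) (by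
    intro a b h
    have h1 : a⁻¹ * b ∈ stab φ x := QuotientGroup.leftRel_apply.mp h
    rw [mem_stab] at h1
    have := congrArg (φ a) h1
    rw [phi_mul_apply, mul_inv_cancel_left] at this
    exact this.symm)

lemma orbitMap_mk (φ : G →* Equiv.Perm (Fin n)) (x : Fin n) (g : G) :
    orbitMap φ x ((g : G) : G ⧸ stab φ x) = φ g x := rfl

lemma orbitMap_injective (φ : G →* Equiv.Perm (Fin n)) (x : Fin n) :
    Function.Injective (orbitMap φ x) := by
  intro q r
  induction q using QuotientGroup.induction_on with
  | H a =>
  induction r using QuotientGroup.induction_on with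
  | H b =>
  intro h
  rw [orbitMap_mk, orbitMap_mk] at h
  refine QuotientGroup.eq.mpr (mem_stab.mpr ?_)
  rw [← phi_mul_apply, ← h, phi_mul_apply, inv_mul_cancel, map_one]
  rfl

/-- The orbit map as an embedding. -/
def orbitEmb (φ : G →* Equiv.Perm (Fin n)) (x : Fin n) : (G ⧸ stab φ x) ↪ Fin n :=
  ⟨orbitMap φ x, orbitMap_injective φ x⟩

lemma mem_range_orbitMap_iff (φ : G →* Equiv.Perm (Fin n)) (x : Fin n) (g : G) (y : Fin n) :
    φ g y ∈ Set.range (orbitMap φ x) ↔ y ∈ Set.range (orbitMap φ x) := by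
  constructor
  · rintro ⟨q, hq⟩
    induction q using QuotientGroup.induction_on with
    | H a =>
    rw [orbitMap_mk] at hq
    refine ⟨((g⁻¹ * a : G) : G ⧸ stab φ x), ?_⟩
    rw [orbitMap_mk, ← phi_mul_apply, hq, map_inv]
    simp
  · rintro ⟨q, hq⟩
    induction q using QuotientGroup.induction_on with
    | H a =>
    rw [orbitMap_mk] at hq
    exact ⟨((g * a : G) : G ⧸ stab φ x), by rw [orbitMap_mk, ← phi_mul_apply, hq]⟩

lemma compl_invariant (φ : G →* Equiv.Perm (Fin n)) (x : Fin n) (g : G) (y : Fin n) :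
    y ∈ (Set.range ⇑(orbitEmb φ x))ᶜ ↔ φ g y ∈ (Set.range ⇑(orbitEmb φ x))ᶜ := by
  simp only [Set.mem_compl_iff]
  exact not_congr (Iff.symm (mem_range_orbitMap_iff φ x g y))

/-- Restriction of `φ` to the complement of the orbit of `x`. -/
def restHom (φ : G →* Equiv.Perm (Fin n)) (x : Fin n) :
    G →* Equiv.Perm ↥(Set.range ⇑(orbitEmb φ x))ᶜ where
  toFun g := (φ g).subtypePerm (fun y => (compl_invariant φ x g y).symm)
  map_one' := by
    refine Equiv.ext fun y => Subtype.ext ?_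
    simp
  map_mul' a b := by
    refine Equiv.ext fun y => Subtype.ext ?_
    simp [Equiv.Perm.subtypePerm_apply]
    rfl

lemma restHom_apply (φ : G →* Equiv.Perm (Fin n)) (x : Fin n) (g : G)
    (y : ↥(Set.range ⇑(orbitEmb φ x))ᶜ) : (restHom φ x g y : Fin n) = φ g y.1 := rfl

lemma stab_index_pos (φ : G →* Equiv.Perm (Fin n)) (x : Fin n) : 1 ≤ (stab φ x).index := by
  have : Finite (G ⧸ stab φ x) := Finite.of_injective _ (orbitMap_injective φ x)
  rw [Subgroup.index_eq_card]
  exact Nat.one_le_iff_ne_zero.mpr (Nat.card_ne_zero.mpr ⟨⟨((1:G) : G ⧸ stab φ x)⟩, this⟩)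

lemma stab_index_le (φ : G →* Equiv.Perm (Fin n)) (x : Fin n) : (stab φ x).index ≤ n := by
  rw [Subgroup.index_eq_card]
  have := Nat.card_le_card_of_injective _ (orbitMap_injective φ x)
  simpa using this

/-- The inverse construction. -/
noncomputable def S : Fin n × (G →* Equiv.Perm (Fin n)) → T G n :=
  fun p => ⟨⟨stab p.2 p.1, ⟨stab_index_pos p.2 p.1, stab_index_le p.2 p.1⟩⟩,
    orbitEmb p.2 p.1, restHom p.2 p.1⟩

lemma R_surjective : Function.Surjective (R (G := G) (n := n)) := by
  intro p
  obtain ⟨x, φ⟩ := p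
  refine ⟨S (x, φ), ?_⟩
  simp only [R, S]
  refine Prod.ext ?_ ?_
  · show orbitMap φ x (((1:G) : G ⧸ stab φ x)) = x
    rw [orbitMap_mk, map_one]
    rfl
  · show glue (stab φ x) (orbitEmb φ x) (restHom φ x) = φ
    refine MonoidHom.ext fun g => Equiv.ext fun y => ?_
    by_cases hy : y ∈ Set.range ⇑(orbitEmb φ x)
    · obtain ⟨q, hq⟩ := hy
      induction q using QuotientGroup.induction_on with
      | H a =>
      subst hq
      show glue _ _ _ g (orbitEmb φ x _) = _
      rw [glue_apply_mem, MulAction.Quotient.smul_mk, smul_eq_mul]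
      show orbitMap φ x (((g * a : G) : G ⧸ stab φ x)) =
        φ g (orbitMap φ x ((a : G) : G ⧸ stab φ x))
      rw [orbitMap_mk, orbitMap_mk, phi_mul_apply]
    · rw [glue_apply_not_mem _ _ _ _ _ hy, restHom_apply]

lemma R_bijective : Function.Bijective (R (G := G) (n := n)) :=
  ⟨R_injective, R_surjective⟩

end Surj
section Count

lemma Nat.card_sigma' {α : Type*} [Fintype α] (f : α → Type*) [∀ a, Finite (f a)] :
    Nat.card (Σ a, f a) = ∑ a, Nat.card (f a) := by
  letI : ∀ a, Fintype (f a) := fun a => Fintype.ofFinite _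
  simp_rw [Nat.card_eq_fintype_card]
  exact Fintype.card_sigma

/-- Transport of hom-sets into permutation groups along an equivalence. -/
def homPermCongr {G' : Type*} [Group G'] {α β : Type*} (e : α ≃ β) :
    (G' →* Equiv.Perm α) ≃ (G' →* Equiv.Perm β) where
  toFun φ := (_root_.permCongrHom e).comp φ
  invFun φ := (_root_.permCongrHom e.symm).comp φ
  left_inv φ := by ext g x; simp
  right_inv φ := by ext g x; simp

variable (ℓ : ℕ)

local notation "Gm" => Multiplicative (Fin ℓ → ℤ)

noncomputable def hc (m : ℕ) : ℕ := Nat.card (Gm →* Equiv.Perm (Fin m))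

lemma finiteT (n : ℕ) : Finite (T Gm n) :=
  Finite.of_injective R R_injective

lemma card_fiber (n : ℕ) (H : Subgroup Gm) (h1 : 1 ≤ H.index) (h2 : H.index ≤ n) :
    Nat.card (Σ ι : (Gm ⧸ H) ↪ Fin n, (Gm →* Equiv.Perm ↥(Set.range ⇑ι)ᶜ))
      = n.descFactorial H.index * hc ℓ (n - H.index) := by
  classical
  have hfin : Finite (Gm ⧸ H) := by
    apply Nat.finite_of_card_ne_zero
    rw [← Subgroup.index_eq_card]
    omega
  cases nonempty_fintype (Gm ⧸ H)
  have hcard : Fintype.card (Gm ⧸ H) = H.index := by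
    rw [← Nat.card_eq_fintype_card, ← Subgroup.index_eq_card]
  have ecompl : ∀ ι : (Gm ⧸ H) ↪ Fin n, ↥(Set.range ⇑ι)ᶜ ≃ Fin (n - H.index) := by
    intro ι
    apply Fintype.equivFinOfCardEq
    rw [Fintype.card_compl_set, Set.card_range_of_injective ι.injective,
      Fintype.card_fin, hcard]
  have e : (Σ ι : (Gm ⧸ H) ↪ Fin n, (Gm →* Equiv.Perm ↥(Set.range ⇑ι)ᶜ))
      ≃ ((Gm ⧸ H) ↪ Fin n) × (Gm →* Equiv.Perm (Fin (n - H.index))) :=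
    (Equiv.sigmaCongrRight fun ι => homPermCongr (ecompl ι)).trans
      (Equiv.sigmaEquivProd _ _)
  rw [Nat.card_congr e, Nat.card_prod]
  congr 1
  rw [Nat.card_eq_fintype_card, Fintype.card_embedding_eq, hcard, Fintype.card_fin]

lemma nonempty_emb (n : ℕ) (H : Subgroup Gm) (h1 : 1 ≤ H.index) (h2 : H.index ≤ n) :
    Nonempty ((Gm ⧸ H) ↪ Fin n) := by
  classical
  have hfin : Finite (Gm ⧸ H) := by
    apply Nat.finite_of_card_ne_zero
    rw [← Subgroup.index_eq_card]
    omega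
  cases nonempty_fintype (Gm ⧸ H)
  apply Function.Embedding.nonempty_of_card_le
  rw [Fintype.card_fin, ← Nat.card_eq_fintype_card, ← Subgroup.index_eq_card]
  exact h2

lemma finiteBase (n : ℕ) : Finite {H : Subgroup Gm // 1 ≤ H.index ∧ H.index ≤ n} := by
  have := finiteT ℓ n
  have hinj : Function.Injective
      (fun H : {H : Subgroup Gm // 1 ≤ H.index ∧ H.index ≤ n} =>
        (⟨H, Classical.choice (nonempty_emb ℓ n H.1 H.2.1 H.2.2), 1⟩ : T Gm n)) := by
    intro a b h
    exact congrArg Sigma.fst h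
  exact Finite.of_injective _ hinj

lemma nat_identity (n : ℕ) (hn : 1 ≤ n) :
    n * hc ℓ n = ∑ k ∈ Finset.Icc 1 n,
      Nat.card {H : Subgroup Gm // H.index = k} * (n.descFactorial k * hc ℓ (n - k)) := by
  classical
  have hfinT := finiteT ℓ n
  have hfinBase := finiteBase ℓ n
  letI : Fintype {H : Subgroup Gm // 1 ≤ H.index ∧ H.index ≤ n} := Fintype.ofFinite _
  have hfinQ : ∀ H : {H : Subgroup Gm // 1 ≤ H.index ∧ H.index ≤ n}, Finite (Gm ⧸ H.1) := by
    intro H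
    apply Nat.finite_of_card_ne_zero
    rw [← Subgroup.index_eq_card]
    have := H.2.1
    omega
  haveI : ∀ H : {H : Subgroup Gm // 1 ≤ H.index ∧ H.index ≤ n},
      Finite ((ι : (Gm ⧸ H.1) ↪ Fin n) × (Gm →* Equiv.Perm ↥(Set.range ⇑ι)ᶜ)) := by
    intro H
    haveI := hfinQ H
    infer_instance
  have h1 : Nat.card (Fin n × (Gm →* Equiv.Perm (Fin n))) = n * hc ℓ n := by
    rw [Nat.card_prod]
    congr 1
    rw [Nat.card_eq_fintype_card, Fintype.card_fin]
  have h2 : Nat.card (T Gm n) = n * hc ℓ n := by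
    rw [← h1]
    exact Nat.card_eq_of_bijective R R_bijective
  have h3 : Nat.card (T Gm n)
      = ∑ H : {H : Subgroup Gm // 1 ≤ H.index ∧ H.index ≤ n},
          n.descFactorial H.1.index * hc ℓ (n - H.1.index) := by
    have := Nat.card_sigma'
      (fun H : {H : Subgroup Gm // 1 ≤ H.index ∧ H.index ≤ n} =>
        Σ ι : (Gm ⧸ H.1) ↪ Fin n, (Gm →* Equiv.Perm ↥(Set.range ⇑ι)ᶜ))
    rw [show Nat.card (T Gm n) = _ from this]
    exact Finset.sum_congr rfl fun H _ => card_fiber ℓ n H.1 H.2.1 H.2.2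
  rw [← h2, h3]
  rw [← Finset.sum_fiberwise_of_maps_to'
    (g := fun H : {H : Subgroup Gm // 1 ≤ H.index ∧ H.index ≤ n} => H.1.index)
    (t := Finset.Icc 1 n)
    (fun H _ => Finset.mem_Icc.mpr H.2)
    (f := fun k => n.descFactorial k * hc ℓ (n - k))]
  refine Finset.sum_congr rfl fun k hk => ?_
  rw [Finset.sum_const, smul_eq_mul]
  congr 1
  have e : {x : {H : Subgroup Gm // 1 ≤ H.index ∧ H.index ≤ n} // x.1.index = k}
      ≃ {H : Subgroup Gm // H.index = k} :=
    ⟨fun x => ⟨x.1.1, x.2⟩,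
     fun H => ⟨⟨H.1, by rw [H.2]; exact Finset.mem_Icc.mp hk⟩, H.2⟩,
     fun x => rfl, fun H => rfl⟩
  calc (Finset.univ.filter fun H : {H : Subgroup Gm // 1 ≤ H.index ∧ H.index ≤ n} =>
        H.1.index = k).card
      = Fintype.card {x : {H : Subgroup Gm // 1 ≤ H.index ∧ H.index ≤ n} // x.1.index = k} :=
        (Fintype.card_subtype _).symm
    _ = Nat.card {x : {H : Subgroup Gm // 1 ≤ H.index ∧ H.index ≤ n} // x.1.index = k} :=
        Nat.card_eq_fintype_card.symm
    _ = Nat.card {H : Subgroup Gm // H.index = k} := Nat.card_congr e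

end Count
/-- `Nhom ℓ n = |Hom(ℤ^ℓ, S_n)| / n!`. -/
noncomputable def Nhom (ℓ n : ℕ) : ℚ :=
  (Nat.card (Multiplicative (Fin ℓ → ℤ) →* Equiv.Perm (Fin n)) : ℚ) / n.factorial

lemma g_eq (ℓ k : ℕ) :
    g ℓ k = Nat.card {H : Subgroup (Multiplicative (Fin ℓ → ℤ)) // H.index = k} :=
  Nat.card_congr
    ⟨fun H => ⟨AddSubgroup.toSubgroup H.1, by
        rw [AddSubgroup.index_toSubgroup]; exact H.2⟩,
     fun K => ⟨AddSubgroup.toSubgroup.symm K.1, by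
        rw [← AddSubgroup.index_toSubgroup, AddSubgroup.toSubgroup.apply_symm_apply]
        exact K.2⟩,
     fun H => Subtype.ext (AddSubgroup.toSubgroup.symm_apply_apply H.1),
     fun K => Subtype.ext (AddSubgroup.toSubgroup.apply_symm_apply K.1)⟩

theorem Nhom_recursion (ℓ : ℕ) (hℓ : 1 ≤ ℓ) :
    Nhom ℓ 0 = 1 ∧
    ∀ n : ℕ, 1 ≤ n →
      (n : ℚ) * Nhom ℓ n = ∑ k ∈ Finset.Icc 1 n, (g ℓ k : ℚ) * Nhom ℓ (n - k) := by
  constructor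
  · rw [Nhom]
    haveI : Subsingleton (Multiplicative (Fin ℓ → ℤ) →* Equiv.Perm (Fin 0)) :=
      ⟨fun f h => MonoidHom.ext fun x => Subsingleton.elim _ _⟩
    have h1 : Nat.card (Multiplicative (Fin ℓ → ℤ) →* Equiv.Perm (Fin 0)) = 1 :=
      Nat.card_eq_one_iff_unique.mpr ⟨inferInstance, ⟨1⟩⟩
    rw [h1]
    simp
  · intro n hn
    have key := nat_identity ℓ n hn
    have hNn : Nhom ℓ n = (hc ℓ n : ℚ) / n.factorial := rfl
    calc (n : ℚ) * Nhom ℓ n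
        = ((n * hc ℓ n : ℕ) : ℚ) / n.factorial := by rw [hNn]; push_cast; ring
      _ = ((∑ k ∈ Finset.Icc 1 n,
            Nat.card {H : Subgroup (Multiplicative (Fin ℓ → ℤ)) // H.index = k}
              * (n.descFactorial k * hc ℓ (n - k)) : ℕ) : ℚ) / n.factorial := by rw [key]
      _ = ∑ k ∈ Finset.Icc 1 n, (g ℓ k : ℚ) * Nhom ℓ (n - k) := by
          push_cast
          rw [Finset.sum_div]
          refine Finset.sum_congr rfl fun k hk => ?_
          obtain ⟨hk1, hk2⟩ := Finset.mem_Icc.mp hk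
          rw [g_eq]
          have hfac : (((n - k).factorial : ℚ) * (n.descFactorial k : ℚ)) = (n.factorial : ℚ) := by
            exact_mod_cast congrArg (Nat.cast (R := ℚ)) (Nat.factorial_mul_descFactorial hk2)
          have h1 : (n.factorial : ℚ) ≠ 0 := Nat.cast_ne_zero.mpr n.factorial_ne_zero
          have h2 : ((n - k).factorial : ℚ) ≠ 0 := Nat.cast_ne_zero.mpr (n - k).factorial_ne_zero
          rw [show Nhom ℓ (n - k) = (hc ℓ (n - k) : ℚ) / (n - k).factorial from rfl]
          field_simp
          ring_nf
          linear_combination ((Nat.card {H : Subgroup (Multiplicative (Fin ℓ → ℤ)) // H.index = k} : ℚ)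
            * (hc ℓ (n - k) : ℚ)) * hfac
end

section
/- For n ≡ 2 (mod 3), n ≥ 2, every partition of n achieving the maximal product 2·3^{(n-2)/3} has exactly (n+1)/3 parts, consisting of one part equal to 2 and (n-2)/3 parts equal to 3. -/
lemma cube_lt_aux (a : ℕ) (h1 : 1 ≤ a) (h3 : a ≠ 3) : a ^ 3 < 3 ^ a := by
  rcases Nat.lt_or_ge a 4 with h | h
  · interval_cases a <;> simp_all <;> norm_num
  · clear h3 h1
    induction a, h using Nat.le_induction with
    | base => norm_num
    | succ n hn ih =>
      have h3n : 3 ^ (n + 1) = 3 * 3 ^ n := by ring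
      rw [h3n]
      nlinarith [ih, hn, mul_le_mul_of_nonneg_right hn (by positivity : (0:ℕ) ≤ n ^ 2),
        mul_le_mul_of_nonneg_right hn (by positivity : (0:ℕ) ≤ n)]

lemma cube_le_aux (a : ℕ) (h1 : 1 ≤ a) : a ^ 3 ≤ 3 ^ a := by
  by_cases h3 : a = 3
  · subst h3; norm_num
  · exact le_of_lt (cube_lt_aux a h1 h3)

lemma bound4_aux (a : ℕ) (h : 4 ≤ a) : 9 * a ^ 3 < 8 * 3 ^ a := by
  induction a, h using Nat.le_induction with
  | base => norm_num
  | succ n hn ih =>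
    have h3n : 3 ^ (n + 1) = 3 * 3 ^ n := by ring
    rw [h3n]
    nlinarith [ih, hn, mul_le_mul_of_nonneg_right hn (by positivity : (0:ℕ) ≤ n ^ 2),
      mul_le_mul_of_nonneg_right hn (by positivity : (0:ℕ) ≤ n)]

lemma prod_cube_le (m : Multiset ℕ) (h : ∀ x ∈ m, 1 ≤ x) :
    m.prod ^ 3 ≤ 3 ^ m.sum := by
  induction m using Multiset.induction with
  | empty => simp
  | cons a s ih =>
    rw [Multiset.prod_cons, Multiset.sum_cons, pow_add, mul_pow]
    exact Nat.mul_le_mul (cube_le_aux a (h a (Multiset.mem_cons_self a s)))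
      (ih fun x hx => h x (Multiset.mem_cons_of_mem hx))

lemma all_three (m : Multiset ℕ) (h : ∀ x ∈ m, 1 ≤ x)
    (he : m.prod ^ 3 = 3 ^ m.sum) : ∀ x ∈ m, x = 3 := by
  induction m using Multiset.induction with
  | empty => simp
  | cons a s ih =>
    rw [Multiset.prod_cons, Multiset.sum_cons, pow_add, mul_pow] at he
    have ha : 1 ≤ a := h a (Multiset.mem_cons_self a s)
    have hs : ∀ x ∈ s, 1 ≤ x := fun x hx => h x (Multiset.mem_cons_of_mem hx)
    have hple := prod_cube_le s hs
    have hpos3 : 0 < (3 : ℕ) ^ s.sum := Nat.pow_pos (by norm_num)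
    have ha3 : a = 3 := by
      by_contra hne
      have hlt := cube_lt_aux a ha hne
      have h1 : a ^ 3 * s.prod ^ 3 ≤ a ^ 3 * 3 ^ s.sum := Nat.mul_le_mul_left _ hple
      have h2 : a ^ 3 * 3 ^ s.sum < 3 ^ a * 3 ^ s.sum :=
        (Nat.mul_lt_mul_right hpos3).mpr hlt
      omega
    subst ha3
    have hpe : s.prod ^ 3 = 3 ^ s.sum := by
      have h27 : (0:ℕ) < 3 ^ 3 := by norm_num
      exact Nat.eq_of_mul_eq_mul_left h27 he
    intro x hx
    rcases Multiset.mem_cons.mp hx with h' | h'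
    · exact h'
    · exact ih hs hpe x h'

lemma key_eq (m : Multiset ℕ) (h : ∀ x ∈ m, 1 ≤ x)
    (he : 9 * m.prod ^ 3 = 8 * 3 ^ m.sum) :
    m = 2 ::ₘ Multiset.replicate ((m.sum - 2) / 3) 3 := by
  induction m using Multiset.induction with
  | empty => simp at he
  | cons a s ih =>
    rw [Multiset.prod_cons, Multiset.sum_cons, pow_add, mul_pow] at he
    have ha : 1 ≤ a := h a (Multiset.mem_cons_self a s)
    have hs : ∀ x ∈ s, 1 ≤ x := fun x hx => h x (Multiset.mem_cons_of_mem hx)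
    have hple := prod_cube_le s hs
    have hppos : 0 < s.prod := Multiset.prod_pos hs
    have hp3 : 0 < s.prod ^ 3 := pow_pos hppos 3
    rcases Nat.lt_or_ge a 4 with h4 | h4
    · interval_cases a
      · -- a = 1
        exfalso
        have hpos3 : 0 < (3 : ℕ) ^ s.sum := Nat.pow_pos (by norm_num)
        nlinarith [hple, hpos3, he]
      · -- a = 2 : then s.prod ^ 3 = 3 ^ s.sum, so all of s is 3
        have hpe : s.prod ^ 3 = 3 ^ s.sum := by nlinarith [he]
        have h3 := all_three s hs hpe
        have hrep : s = Multiset.replicate (Multiset.card s) 3 :=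
          Multiset.eq_replicate_card.mpr h3
        have hsum : s.sum = 3 * Multiset.card s := by
          rw [hrep]; simp [Multiset.sum_replicate, mul_comm]
        rw [Multiset.sum_cons, hsum]
        have hdiv : (2 + 3 * Multiset.card s - 2) / 3 = Multiset.card s := by omega
        rw [hdiv, ← hrep]
      · -- a = 3
        have hpe : 9 * s.prod ^ 3 = 8 * 3 ^ s.sum := by nlinarith [he]
        have hss := ih hs hpe
        set j := (s.sum - 2) / 3 with hj
        have hsum : s.sum = 2 + 3 * j := by
          rw [hss]; simp [Multiset.sum_cons, Multiset.sum_replicate, mul_comm]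
        rw [Multiset.sum_cons, hsum]
        have hdiv : (3 + (2 + 3 * j) - 2) / 3 = j + 1 := by omega
        rw [hdiv, hss]
        rw [Multiset.replicate_succ]
        exact Multiset.cons_swap 3 2 _
    · -- a ≥ 4 : contradiction
      exfalso
      have hb := bound4_aux a h4
      have h1 : 9 * a ^ 3 * s.prod ^ 3 < 8 * 3 ^ a * s.prod ^ 3 :=
        (Nat.mul_lt_mul_right hp3).mpr hb
      have h2 : 8 * 3 ^ a * s.prod ^ 3 ≤ 8 * 3 ^ a * 3 ^ s.sum :=
        Nat.mul_le_mul_left _ hple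
      nlinarith [he]

theorem unique_max_partition_mod_two (n : ℕ) (hn : 2 ≤ n) (h : n % 3 = 2) :
    ∀ m : Multiset ℕ, (∀ x ∈ m, 1 ≤ x) → m.sum = n →
      m.prod = 2 * 3 ^ ((n - 2) / 3) →
        Multiset.card m = (n + 1) / 3 ∧ m = 2 ::ₘ Multiset.replicate ((n - 2) / 3) 3 := by
  intro m hpos hsum hprod
  set k := (n - 2) / 3 with hk
  have hnk : n = 3 * k + 2 := by omega
  have he : 9 * m.prod ^ 3 = 8 * 3 ^ m.sum := by
    have h3 : (3:ℕ) ^ (3 * k + 2) = ((3:ℕ) ^ k) ^ 3 * 9 := by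
      rw [pow_add, mul_comm 3 k, pow_mul]; norm_num
    rw [hprod, hsum, hnk, h3]; ring
  have heq := key_eq m hpos he
  rw [hsum] at heq
  constructor
  · rw [heq]
    simp [Multiset.card_cons, Multiset.card_replicate]
    omega
  · exact heq
end

section
/- For ℓ ≥ 2 and n ≡ 0 (mod 3), N_ℓ(n) ≥ 3^{(ℓ-2)n/3}/((n/3)!), and for n ≡ 2 (mod 3), n ≥ 2, N_ℓ(n) ≥ (2·3^{(n-2)/3})^{ℓ-2}/(((n-2)/3)!). -/
section gbound
variable (m n : ℕ) [NeZero n]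

/-- reduction mod n, componentwise -/
def redHom (ℓ : ℕ) : (Fin ℓ → ℤ) →+ (Fin ℓ → ZMod n) :=
  AddMonoidHom.mk' (fun x i => ((x i : ℤ) : ZMod n)) (by intro x y; funext i; push_cast; simp)

instance finIdx (ℓ : ℕ) : Finite {H : AddSubgroup (Fin ℓ → ℤ) // H.index = n} := by
  have hFin : Finite (AddSubgroup (Fin ℓ → ZMod n)) :=
    Finite.of_injective (fun H => (H : Set (Fin ℓ → ZMod n))) SetLike.coe_injective
  apply Finite.of_injective (fun H => (H.1.map (redHom n ℓ)))
  intro H1 H2 h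
  have key : ∀ H : {H : AddSubgroup (Fin ℓ → ℤ) // H.index = n},
      (redHom n ℓ).ker ≤ H.1 := by
    rintro ⟨H, hH⟩ x hx
    simp only [AddMonoidHom.mem_ker, redHom, AddMonoidHom.mk'_apply] at hx
    have hdvd : ∀ i, (n : ℤ) ∣ x i := by
      intro i
      have := congrFun hx i
      simpa [ZMod.intCast_zmod_eq_zero_iff_dvd] using this
    choose y hy using hdvd
    have hxy : x = H.index • y := by
      funext i; simp [hH, hy i, mul_comm]
    simpa [hxy] using AddSubgroup.nsmul_index_mem H y
  have e1 := AddSubgroup.comap_map_eq (redHom n ℓ) H1.1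
  have e2 := AddSubgroup.comap_map_eq (redHom n ℓ) H2.1
  have h' : AddSubgroup.map (redHom n ℓ) H1.1 = AddSubgroup.map (redHom n ℓ) H2.1 := h
  apply Subtype.ext
  rw [← sup_eq_left.mpr (key H1), ← e1, h', e2, sup_eq_left.mpr (key H2)]
end gbound

section ker
variable {m n : ℕ} [NeZero n]

/-- the linear form with coefficients `Fin.cons 1 a` -/
def phi (a : Fin m → ZMod n) : (Fin (m + 1) → ℤ) →+ ZMod n :=
  AddMonoidHom.mk' (fun x => ∑ i, (Fin.cons 1 a : Fin (m + 1) → ZMod n) i * ((x i : ℤ) : ZMod n))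
    (by intro x y; simp [mul_add, Finset.sum_add_distrib])

lemma phi_single (a : Fin m → ZMod n) (j : Fin (m + 1)) (t : ℤ) :
    phi a (Pi.single j t) = (Fin.cons 1 a : Fin (m + 1) → ZMod n) j * (t : ZMod n) := by
  simp only [phi, AddMonoidHom.mk'_apply]
  rw [Finset.sum_eq_single j]
  · simp
  · intro i _ hij; simp [Pi.single_apply, hij]
  · simp

lemma phi_surj (a : Fin m → ZMod n) : Function.Surjective (phi a) := by
  intro z
  refine ⟨Pi.single 0 (z.val : ℤ), ?_⟩
  rw [phi_single]
  simp [ZMod.natCast_val, ZMod.cast_id]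

lemma phi_ker_index (a : Fin m → ZMod n) : (phi a).ker.index = n := by
  rw [AddSubgroup.index_ker, AddMonoidHom.range_eq_top.mpr (phi_surj a),
    Nat.card_congr AddSubgroup.topEquiv.toEquiv, Nat.card_zmod]

lemma phi_ker_inj : Function.Injective
    (fun a : Fin m → ZMod n => (⟨(phi a).ker, phi_ker_index a⟩ :
      {H : AddSubgroup (Fin (m + 1) → ℤ) // H.index = n})) := by
  intro a b h
  have h' : (phi a).ker = (phi b).ker := congrArg Subtype.val h
  funext i
  set v : Fin (m + 1) → ℤ := Pi.single i.succ 1 - Pi.single 0 ((a i).val : ℤ) with hv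
  have hva : phi a v = 0 := by
    simp [hv, map_sub, phi_single, ZMod.natCast_val, ZMod.cast_id]
  have hvb : phi b v = 0 := by
    rw [← AddMonoidHom.mem_ker, ← h', AddMonoidHom.mem_ker]; exact hva
  simp [hv, map_sub, phi_single, ZMod.natCast_val, ZMod.cast_id] at hvb
  linear_combination (norm := ring_nf) -hvb

end ker

lemma g_ge (m n : ℕ) (hn : n ≠ 0) : n ^ m ≤ g (m + 1) n := by
  haveI : NeZero n := ⟨hn⟩
  have := Nat.card_le_card_of_injective _ (phi_ker_inj (m := m) (n := n))
  simpa [Nat.card_pi, Nat.card_zmod, g] using this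


/-- `N ℓ n`: coefficients of `exp (∑_{n≥1} g_ℓ(n) tⁿ/n)`, given by the equivalent
recursion `n · N_ℓ(n) = ∑_{k=1}^n g_ℓ(k) N_ℓ(n-k)`, `N_ℓ(0) = 1`. -/
noncomputable def N (ℓ : ℕ) : ℕ → ℚ
  | 0 => 1
  | n + 1 =>
    (∑ k ∈ (Finset.Icc 1 (n + 1)).attach, (g ℓ k.1 : ℚ) * N ℓ (n + 1 - k.1)) / (n + 1)
decreasing_by
  have h := Finset.mem_Icc.mp k.2; omega

lemma N_zero (ℓ : ℕ) : N ℓ 0 = 1 := by rw [N]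

lemma N_succ (ℓ n : ℕ) :
    N ℓ (n + 1) = (∑ k ∈ Finset.Icc 1 (n + 1), (g ℓ k : ℚ) * N ℓ (n + 1 - k)) / (n + 1) := by
  rw [N]; congr 1
  exact Finset.sum_attach _ fun k => (g ℓ k : ℚ) * N ℓ (n + 1 - k)

lemma N_nonneg (ℓ n : ℕ) : 0 ≤ N ℓ n := by
  induction n using Nat.strong_induction_on with
  | _ n ih =>
    match n with
    | 0 => rw [N_zero]; norm_num
    | n + 1 =>
      rw [N_succ]
      apply div_nonneg _ (by positivity)
      apply Finset.sum_nonneg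
      intro k hk
      have hk' := Finset.mem_Icc.mp hk
      exact mul_nonneg (Nat.cast_nonneg _) (ih _ (by omega))

lemma N_ge_sum (ℓ n : ℕ) (S : Finset ℕ) (hS : S ⊆ Finset.Icc 1 (n + 1)) :
    (∑ k ∈ S, (g ℓ k : ℚ) * N ℓ (n + 1 - k)) / (n + 1) ≤ N ℓ (n + 1) := by
  rw [N_succ]
  gcongr ?_ / _
  exact Finset.sum_le_sum_of_subset_of_nonneg hS
    fun k _ _ => mul_nonneg (Nat.cast_nonneg _) (N_nonneg _ _)

lemma key (p m : ℕ) :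
    (3 : ℚ) ^ (p * m) / (m.factorial : ℚ) ≤ N (p + 2) (3 * m) ∧
    (2 : ℚ) ^ p * 3 ^ (p * m) / (m.factorial : ℚ) ≤ N (p + 2) (3 * m + 2) := by
  have hg2 : (2 : ℚ) ^ (p + 1) ≤ (g (p + 2) 2 : ℚ) := by
    exact_mod_cast g_ge (p + 1) 2 (by norm_num)
  have hg3 : (3 : ℚ) ^ (p + 1) ≤ (g (p + 2) 3 : ℚ) := by
    exact_mod_cast g_ge (p + 1) 3 (by norm_num)
  induction m with
  | zero =>
    constructor
    · simp [N_zero]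
    · have h := N_ge_sum (p + 2) 1 {2} (by decide)
      rw [Finset.sum_singleton] at h
      norm_num [N_zero] at h
      calc (2 : ℚ) ^ p * 3 ^ (p * 0) / (Nat.factorial 0 : ℚ) = 2 ^ (p + 1) / 2 := by
            simp [pow_succ]
        _ ≤ (g (p + 2) 2 : ℚ) / 2 := by gcongr
        _ ≤ N (p + 2) 2 := h
  | succ m ih =>
    have hf : (m.factorial : ℚ) ≠ 0 := Nat.cast_ne_zero.mpr m.factorial_ne_zero
    have hA : (3 : ℚ) ^ (p * (m + 1)) / ((m + 1).factorial : ℚ) ≤ N (p + 2) (3 * m + 2 + 1) := by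
      have h := N_ge_sum (p + 2) (3 * m + 2) {3} (by
        intro x hx; simp only [Finset.mem_singleton] at hx; subst hx
        simp only [Finset.mem_Icc]; omega)
      rw [Finset.sum_singleton, show 3 * m + 2 + 1 - 3 = 3 * m from by omega] at h
      calc (3 : ℚ) ^ (p * (m + 1)) / ((m + 1).factorial : ℚ)
          = (3 : ℚ) ^ (p + 1) * (3 ^ (p * m) / m.factorial) / ((3 * m + 2 : ℕ) + 1) := by
            rw [Nat.factorial_succ, show p * (m + 1) = p * m + p from by ring, pow_add, pow_succ]
            push_cast
            have h1 : (m : ℚ) + 1 ≠ 0 := by positivity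
            have h2 : (3 : ℚ) * m + 2 + 1 ≠ 0 := by positivity
            field_simp
            ring
        _ ≤ (g (p + 2) 3 : ℚ) * N (p + 2) (3 * m) / ((3 * m + 2 : ℕ) + 1) := by
            gcongr <;> first | exact hg3 | exact ih.1 | positivity
        _ ≤ N (p + 2) (3 * m + 2 + 1) := h
    constructor
    · rw [show 3 * (m + 1) = 3 * m + 2 + 1 from by ring]
      exact hA
    · have h := N_ge_sum (p + 2) (3 * m + 4) {2, 3} (by
        intro x hx; simp only [Finset.mem_insert, Finset.mem_singleton] at hx
        simp only [Finset.mem_Icc]; omega)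
      rw [Finset.sum_pair (by norm_num : (2 : ℕ) ≠ 3),
        show 3 * m + 4 + 1 - 2 = 3 * m + 2 + 1 from by omega,
        show 3 * m + 4 + 1 - 3 = 3 * m + 2 from by omega] at h
      rw [show 3 * (m + 1) + 2 = 3 * m + 4 + 1 from by ring]
      calc (2 : ℚ) ^ p * 3 ^ (p * (m + 1)) / ((m + 1).factorial : ℚ)
          = ((2 : ℚ) ^ (p + 1) * (3 ^ (p * (m + 1)) / (m + 1).factorial)
              + 3 ^ (p + 1) * ((2 : ℚ) ^ p * 3 ^ (p * m) / m.factorial)) / ((3 * m + 4 : ℕ) + 1) := by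
            rw [Nat.factorial_succ, show p * (m + 1) = p * m + p from by ring, pow_add,
              pow_succ, pow_succ]
            push_cast
            have h1 : (m : ℚ) + 1 ≠ 0 := by positivity
            have h2 : (3 : ℚ) * m + 4 + 1 ≠ 0 := by positivity
            field_simp
            ring
        _ ≤ ((g (p + 2) 2 : ℚ) * N (p + 2) (3 * m + 2 + 1)
              + (g (p + 2) 3 : ℚ) * N (p + 2) (3 * m + 2)) / ((3 * m + 4 : ℕ) + 1) := by
            gcongr <;>
              first | exact hg2 | exact hA | exact hg3 | exact ih.2 | positivity
        _ ≤ N (p + 2) (3 * m + 4 + 1) := h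

theorem N_lower_bounds (ℓ n : ℕ) (hℓ : 2 ≤ ℓ) (hn : 1 ≤ n) :
    (n % 3 = 0 → (3 : ℚ) ^ ((ℓ - 2) * (n / 3)) / ((n / 3).factorial : ℚ) ≤ N ℓ n) ∧
    (n % 3 = 2 →
      ((2 * 3 ^ ((n - 2) / 3) : ℕ) : ℚ) ^ (ℓ - 2) / (((n - 2) / 3).factorial : ℚ) ≤ N ℓ n) := by
  obtain ⟨p, rfl⟩ : ∃ p, ℓ = p + 2 := ⟨ℓ - 2, by omega⟩
  rw [show p + 2 - 2 = p from by omega]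
  constructor
  · intro h0
    obtain ⟨q, rfl⟩ : ∃ q, n = 3 * q := ⟨n / 3, by omega⟩
    rw [Nat.mul_div_cancel_left q (by norm_num)]
    exact (key p q).1
  · intro h2
    obtain ⟨q, rfl⟩ : ∃ q, n = 3 * q + 2 := ⟨(n - 2) / 3, by omega⟩
    rw [show 3 * q + 2 - 2 = 3 * q from by omega, Nat.mul_div_cancel_left q (by norm_num)]
    have : ((2 * 3 ^ q : ℕ) : ℚ) ^ p = (2 : ℚ) ^ p * 3 ^ (p * q) := by
      push_cast
      rw [mul_pow, ← pow_mul, mul_comm q p]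
    rw [this]
    exact (key p q).2
end
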